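/- Let p : (X,T) → (Y,S) be an extension of Cantor minimal systems factoring as X →ʳ Z →q Y where q has connected fibers and r is a proximal extension. Then for every n ≥ 1, every continuous T×ⁿ-invariant integer-valued function on Xⁿ_p is constant; in particular I(Xⁿ_p) ≅ ℤ. -/

import Mathlib

/-- The `n`-th relative cartesian power `Xⁿ_p` of `X` with respect to `p : X → Y`. -/
abbrev FiberPow {X Y : Type*} (p : X → Y) (n : ℕ) : Type _ :=
  {v : Fin n → X // ∀ i j, p (v i) = p (v j)}

/-!
Write `ρ : Xⁿ_p → Zⁿ_q` for `r` applied coordinatewise. If `ρ v = ρ w`, every coordinate pair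
`(vᵢ, wᵢ)` is proximal; inductively over the coordinates (each time minimising one coordinate
distance over a compact invariant set) the orbit closure of `(v, w)` contains a diagonal point
`(z, z)`, and a locally constant invariant `f` then takes the same value at `v` and `w`.
Since `ρ` is a quotient map, `f` descends to a continuous function on `Zⁿ_q`, which is constant
on the connected sets `(q⁻¹{y})ⁿ`. Hence `f` descends once more to a continuous `S`-invariant
function on `Y`, which is constant because `Y` is minimal.
-/

open Set Function Topology

def Proximal {X : Type*} [PseudoMetricSpace X] (T : X → X) (x y : X) : Prop :=
  ∀ δ > 0, ∃ k : ℕ, dist (T^[k] x) (T^[k] y) < δ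

section Proximal

variable {E X : Type*} [TopologicalSpace E] [MetricSpace X] {G : E → E} {T : X → X}

theorem IsCompact.exists_mem_eq_of_proximal {K : Set E} (hK : IsCompact K) (hKne : K.Nonempty)
    (hGK : MapsTo G K K) {a b : E → X} (ha : Continuous a) (hb : Continuous b)
    (haG : Semiconj a G T) (hbG : Semiconj b G T) (hprox : ∀ u ∈ K, Proximal T (a u) (b u)) :
    ∃ ζ ∈ K, a ζ = b ζ := by
  obtain ⟨ζ, hζK, hmin⟩ := hK.exists_isMinOn hKne (ha.dist hb).continuousOn
  refine ⟨ζ, hζK, by_contra fun hne => ?_⟩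
  obtain ⟨k, hk⟩ := hprox ζ hζK _ (dist_pos.2 hne)
  rw [← haG.iterate_right k ζ, ← hbG.iterate_right k ζ] at hk
  exact hk.not_ge (hmin (hGK.iterate k hζK))

theorem IsCompact.exists_mem_forall_eq_of_proximal {ι : Type*} [Fintype ι] {K : Set E}
    (hK : IsCompact K) (hKne : K.Nonempty) (hGK : MapsTo G K K) {a b : ι → E → X}
    (ha : ∀ i, Continuous (a i)) (hb : ∀ i, Continuous (b i))
    (haG : ∀ i, Semiconj (a i) G T) (hbG : ∀ i, Semiconj (b i) G T)
    (hprox : ∀ u ∈ K, ∀ i, Proximal T (a i u) (b i u)) :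
    ∃ ζ ∈ K, ∀ i, a i ζ = b i ζ := by
  classical
  suffices h : ∀ s : Finset ι, (K ∩ {u | ∀ i ∈ s, a i u = b i u}).Nonempty by
    obtain ⟨ζ, hζK, hζ⟩ := h Finset.univ
    exact ⟨ζ, hζK, fun i => hζ i (Finset.mem_univ i)⟩
  intro s
  induction s using Finset.induction_on with
  | empty => simpa using hKne
  | insert i s _ ih =>
    have hclosed : IsClosed {u | ∀ j ∈ s, a j u = b j u} := by
      simp only [ofPred_forall]
      exact isClosed_iInter fun j => isClosed_iInter fun _ => isClosed_eq (ha j) (hb j)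
    have hmaps : MapsTo G {u | ∀ j ∈ s, a j u = b j u} {u | ∀ j ∈ s, a j u = b j u} :=
      fun u hu j hj => by rw [(haG j).eq, (hbG j).eq, hu j hj]
    obtain ⟨ζ, ⟨hζK, hζs⟩, hζi⟩ := (hK.inter_right hclosed).exists_mem_eq_of_proximal ih
      (hGK.inter_inter hmaps) (ha i) (hb i) (haG i) (hbG i) fun u hu => hprox u hu.1 i
    exact ⟨ζ, hζK, Finset.forall_mem_insert _ _ _ |>.2 ⟨hζi, hζs⟩⟩

end Proximal

section OrbitClosure

variable {E : Type*} [TopologicalSpace E] {G : E → E}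

theorem mapsTo_closure_range_iterate (hG : Continuous G) (x : E) :
    MapsTo G (closure (range fun k => G^[k] x)) (closure (range fun k => G^[k] x)) :=
  MapsTo.closure (fun _ ⟨k, hk⟩ => ⟨k + 1, (iterate_succ_apply' G k x).trans (congrArg G hk)⟩) hG

theorem closure_range_iterate_subset {K : Set E} (hK : IsClosed K) (hGK : MapsTo G K K) {x : E}
    (hx : x ∈ K) : closure (range fun k => G^[k] x) ⊆ K :=
  closure_minimal (range_subset_iff.2 fun k => hGK.iterate k hx) hK

theorem apply_eq_of_mem_closure_orbit_diag {β : Type*} [TopologicalSpace β] [DiscreteTopology β]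
    {f : E → β} (hf : Continuous f) (hfG : f ∘ G = f) {v w z : E}
    (hz : (z, z) ∈ closure (range fun k => (Prod.map G G)^[k] (v, w))) : f v = f w := by
  have hopen : IsOpen {u : E × E | f u.1 = f u.2} :=
    (isOpen_discrete (diagonal β)).preimage (hf.prodMap hf)
  obtain ⟨_, hk, k, rfl⟩ := mem_closure_iff.1 hz _ hopen rfl
  have hfk : ∀ u, f (G^[k] u) = f u := congrFun (iterate_invariant hfG k)
  simpa only [Prod.map_iterate, mem_ofPred_eq, Prod.map_fst, Prod.map_snd, hfk] using hk

end OrbitClosure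

theorem exists_continuous_comp_eq {A B β : Type*} [TopologicalSpace A] [CompactSpace A]
    [TopologicalSpace B] [T2Space B] [TopologicalSpace β] {π : A → B} (hπ : Continuous π)
    (hπs : Surjective π) {f : A → β} (hf : Continuous f) (hfπ : ∀ a a', π a = π a' → f a = f a') :
    ∃ g : B → β, Continuous g ∧ ∀ a, f a = g (π a) := by
  have hq : IsQuotientMap (⟨π, hπ⟩ : C(A, B)) := .of_surjective_continuous hπs hπ
  exact ⟨hq.lift ⟨f, hf⟩ hfπ, (hq.lift _ _).continuous,
    fun a => (DFunLike.congr_fun (hq.lift_comp ⟨f, hf⟩ hfπ) a).symm⟩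

theorem apply_eq_of_dense_zpow_orbit {Y β : Type*} [TopologicalSpace Y] [TopologicalSpace β]
    [T1Space β] {S : Equiv.Perm Y} {h : Y → β} (hh : Continuous h) (hhS : ∀ y, h (S y) = h y)
    {y₀ : Y} (hdense : Dense (range fun k : ℤ => (S ^ k) y₀)) (y : Y) : h y = h y₀ := by
  have hzpow (k : ℤ) : ∀ y, h ((S ^ k) y) = h y :=
    zpow_induction_right (P := fun σ : Equiv.Perm Y => ∀ y, h (σ y) = h y) (fun _ => rfl)
      (fun σ hσ y => by rw [Equiv.Perm.mul_apply, hσ, hhS])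
      (fun σ hσ y => by
        rw [Equiv.Perm.mul_apply, hσ, ← hhS]; exact congrArg h (S.apply_symm_apply y)) k
  have hsub : closure (range fun k : ℤ => (S ^ k) y₀) ⊆ h ⁻¹' {h y₀} :=
    closure_minimal (range_subset_iff.2 fun k => hzpow k y₀) (isClosed_singleton.preimage hh)
  exact hsub (hdense.closure_eq ▸ mem_univ y)

theorem apply_eq_of_semiconj_minimal {A Y β : Type*} [TopologicalSpace A] [CompactSpace A]
    [TopologicalSpace Y] [T2Space Y] [TopologicalSpace β] [T1Space β] {F : A → A}
    {S : Equiv.Perm Y} {π : A → Y} (hπ : Continuous π) (hπs : Surjective π)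
    (hπF : Semiconj π F S) (hY : ∀ y, Dense (range fun k : ℤ => (S ^ k) y)) {f : A → β}
    (hf : Continuous f) (hfF : ∀ a, f (F a) = f a) (hfπ : ∀ a a', π a = π a' → f a = f a')
    (a a' : A) : f a = f a' := by
  obtain ⟨h, hh, hfh⟩ := exists_continuous_comp_eq hπ hπs hf hfπ
  have hhS : ∀ y, h (S y) = h y := hπs.forall.2 fun a => by rw [← hπF.eq, ← hfh, ← hfh, hfF]
  rw [hfh, hfh, apply_eq_of_dense_zpow_orbit hh hhS (hY _)]

namespace FiberPow

variable {X Y Z : Type*} {p : X → Y} {q : Z → Y} {n : ℕ}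

def map (r : X → Z) (hrq : ∀ x x', p x = p x' → q (r x) = q (r x')) (v : FiberPow p n) :
    FiberPow q n :=
  ⟨fun i => r (v.1 i), fun i j => hrq _ _ (v.2 i j)⟩

theorem map_surjective {r : X → Z} (hrq : ∀ x x', p x = p x' → q (r x) = q (r x'))
    (hr : Surjective r) (hpqr : ∀ x, p x = q (r x)) : Surjective (map (n := n) r hrq) := by
  intro u
  choose x hx using fun i => hr (u.1 i)
  exact ⟨⟨x, fun i j => by rw [hpqr, hpqr, hx, hx, u.2 i j]⟩, Subtype.ext (funext hx)⟩

variable [TopologicalSpace X] [TopologicalSpace Z]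

theorem continuous_map {r : X → Z} (hr : Continuous r)
    (hrq : ∀ x x', p x = p x' → q (r x) = q (r x')) : Continuous (map (n := n) r hrq) :=
  (continuous_pi fun i => hr.comp ((continuous_apply i).comp continuous_subtype_val)).subtype_mk _

theorem compactSpace [CompactSpace X] [TopologicalSpace Y] [T2Space Y] (hp : Continuous p)
    (n : ℕ) : CompactSpace (FiberPow p n) := by
  refine isCompact_iff_compactSpace.1
    (IsClosed.isCompact (s := {v : Fin n → X | ∀ i j, p (v i) = p (v j)}) ?_)
  simp only [ofPred_forall]
  exact isClosed_iInter fun i => isClosed_iInter fun j =>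
    isClosed_eq (hp.comp (continuous_apply i)) (hp.comp (continuous_apply j))

theorem isPreconnected_ofPred_forall_eq {y : Y} (hy : IsPreconnected (q ⁻¹' {y})) (n : ℕ) :
    IsPreconnected {u : FiberPow q n | ∀ i, q (u.1 i) = y} := by
  have himage : Subtype.val '' {u : FiberPow q n | ∀ i, q (u.1 i) = y} =
      univ.pi fun _ => q ⁻¹' {y} := by
    ext v
    simp only [mem_image, mem_ofPred_eq, mem_pi, mem_univ, mem_preimage, mem_singleton_iff,
      forall_const, Subtype.exists, exists_and_left, exists_prop, exists_eq_right_right,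
      and_iff_left_iff_imp]
    exact fun hv i j => (hv i).trans (hv j).symm
  rw [← IsEmbedding.subtypeVal.isInducing.isPreconnected_image, himage]
  exact isPreconnected_univ_pi fun _ => hy

theorem apply_eq_of_isPreconnected_fiber {β : Type*} [TopologicalSpace β] [DiscreteTopology β]
    (hq : ∀ y, IsPreconnected (q ⁻¹' {y})) (g : C(FiberPow q n, β)) {u u' : FiberPow q n}
    (i : Fin n) (h : q (u.1 i) = q (u'.1 i)) : g u = g u' :=
  (isPreconnected_ofPred_forall_eq (hq (q (u.1 i))) n).constant g.continuous.continuousOn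
    (fun j => u.2 j i) (fun j => (u'.2 j i).trans h.symm)

end FiberPow

theorem FiberPow.apply_eq_of_proximal {X Y Z β : Type*} [MetricSpace X] [CompactSpace X]
    [TopologicalSpace Y] [T2Space Y] [TopologicalSpace Z] [T2Space Z] [TopologicalSpace β]
    [DiscreteTopology β] {p : X → Y} (hp : Continuous p) {T : X → X} (hT : Continuous T)
    (hpT : ∀ x x', p x = p x' → p (T x) = p (T x')) {r : X → Z} (hr : Continuous r) {R : Z → Z}
    (hrT : Semiconj r T R) (hprox : ∀ x x', r x = r x' → Proximal T x x')
    {n : ℕ} (f : C(FiberPow p n, β)) (hf : ∀ v, f (map T hpT v) = f v) {v w : FiberPow p n}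
    (hvw : ∀ i, r (v.1 i) = r (w.1 i)) : f v = f w := by
  have := compactSpace hp n
  set F : FiberPow p n → FiberPow p n := map T hpT
  have hF : Continuous F := continuous_map hT hpT
  set K := closure (range fun k => (Prod.map F F)^[k] (v, w))
  have hfst (i : Fin n) : Continuous fun u : FiberPow p n × FiberPow p n => u.1.1 i :=
    (continuous_apply i).comp (continuous_subtype_val.comp continuous_fst)
  have hsnd (i : Fin n) : Continuous fun u : FiberPow p n × FiberPow p n => u.2.1 i :=
    (continuous_apply i).comp (continuous_subtype_val.comp continuous_snd)
  have hrel : K ⊆ {u | ∀ i, r (u.1.1 i) = r (u.2.1 i)} := by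
    refine closure_range_iterate_subset ?_ (fun u hu i => ?_) hvw
    · simp only [ofPred_forall]
      exact isClosed_iInter fun i => isClosed_eq (hr.comp (hfst i)) (hr.comp (hsnd i))
    · simp only [Prod.map_fst, Prod.map_snd]
      exact (hrT.eq _).trans ((congrArg R (hu i)).trans (hrT.eq _).symm)
  obtain ⟨ζ, hζK, hζ⟩ := isClosed_closure.isCompact.exists_mem_forall_eq_of_proximal (K := K)
    ⟨_, subset_closure ⟨0, rfl⟩⟩ (mapsTo_closure_range_iterate (hF.prodMap hF) _) hfst hsnd
    (fun _ _ => rfl) (fun _ _ => rfl) fun u hu i => hprox _ _ (hrel hu i)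
  have hdiag : (ζ.1, ζ.1) = ζ := Prod.ext rfl (Subtype.ext (funext hζ))
  exact apply_eq_of_mem_closure_orbit_diag f.continuous (funext hf) (hdiag ▸ hζK)

/-- let `p = q ∘ r : X → Z → Y` be an extension of Cantor minimal
systems where `q` has connected fibers and `r` is proximal.  Then every continuous
`T×ⁿ`-invariant integer-valued function on `Xⁿ_p` is constant (so `I(Xⁿ_p) ≅ ℤ`). -/
theorem invariant_const_of_connected_fibers {X Y Z : Type*}
    [MetricSpace X] [CompactSpace X]
    [MetricSpace Y]
    [MetricSpace Z]
    (T : X ≃ₜ X) (S : Y ≃ₜ Y) (R : Z ≃ₜ Z)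
    (hminY : ∀ y : Y, Dense (Set.range fun n : ℤ => (S.toEquiv ^ n) y))
    (r : C(X, Z)) (hrs : Function.Surjective r)
    (q : C(Z, Y)) (hqs : Function.Surjective q)
    (p : C(X, Y)) (hpqr : ∀ x : X, p x = q (r x))
    (hfacr : ∀ x : X, r (T x) = R (r x))
    (hfacq : ∀ z : Z, q (R z) = S (q z))
    (hconn : ∀ y : Y, IsConnected (q ⁻¹' {y}))
    (hprox : ∀ x x' : X, r x = r x' → ∀ δ : ℝ, 0 < δ →
      ∃ k : ℕ, 0 < k ∧ dist ((T.toEquiv ^ k) x) ((T.toEquiv ^ k) x') < δ)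
    (n : ℕ) (hn : 1 ≤ n) (f : C(FiberPow (⇑p) n, ℤ))
    (hinv : ∀ v : FiberPow (⇑p) n,
      f ⟨fun i => T (v.1 i), by
          intro i j
          rw [hpqr, hpqr, hfacr, hfacr, hfacq, hfacq]
          have := v.2 i j
          rw [hpqr, hpqr] at this
          rw [this]⟩ = f v) :
    ∀ v w : FiberPow (⇑p) n, f v = f w := by
  have hpT : Semiconj p T S := fun x => by rw [hpqr, hpqr, hfacr, hfacq]
  have hTp : ∀ x x', p x = p x' → p (T x) = p (T x') := fun x x' h => by rw [hpT.eq, hpT.eq, h]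
  have hrq : ∀ x x', p x = p x' → q (r x) = q (r x') := fun x x' h => by rwa [hpqr, hpqr] at h
  have := FiberPow.compactSpace p.continuous n
  obtain ⟨g, hg, hfg⟩ := exists_continuous_comp_eq (FiberPow.continuous_map r.continuous hrq)
    (FiberPow.map_surjective hrq hrs hpqr) f.continuous fun v w hvw =>
      FiberPow.apply_eq_of_proximal p.continuous T.continuous hTp r.continuous hfacr
        (fun x x' hxx' δ hδ => (hprox x x' hxx' δ hδ).imp fun _ => And.right) f (fun v => hinv v)
        fun i => congrFun (congrArg Subtype.val hvw) i
  let i₀ : Fin n := ⟨0, hn⟩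
  have hps : Function.Surjective p := fun y =>
    (hqs y).elim fun z hz => (hrs z).elim fun x hx => ⟨x, by rw [hpqr, hx, hz]⟩
  refine apply_eq_of_semiconj_minimal (F := FiberPow.map T hTp) (S := S.toEquiv)
    (π := fun v : FiberPow p n => p (v.1 i₀))
    (p.continuous.comp ((continuous_apply i₀).comp continuous_subtype_val))
    (fun y => let ⟨x, hx⟩ := hps y; ⟨⟨fun _ => x, fun _ _ => rfl⟩, hx⟩)
    (fun v => hpT (v.1 i₀)) hminY f.continuous (fun v => hinv v) fun v w hvw => ?_
  rw [hfg, hfg]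
  exact FiberPow.apply_eq_of_isPreconnected_fiber (fun y => (hconn y).isPreconnected) ⟨g, hg⟩ i₀
    (hrq _ _ hvw)
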